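/- Let s, r be positive integers and x = s·log q / log(1 + 1/r). Then a monic polynomial h ∈ 𝔽_q[t] is x-semi-superior highly composite if and only if h = ĥ(x)/(P_{i_1}···P_{i_v}) for some 0 ≤ v ≤ π(s) and some distinct monic irreducible polynomials P_{i_1}, …, P_{i_v} of degree s; such an h has degree deg ĥ(x) − v·s, and there are exactly 2^{π(s)} x-SSHC polynomials. -/

import Mathlib

open Polynomial

/-- The number of monic divisors of a polynomial. -/
noncomputable def tau {Fq : Type} [Field Fq] (f : Fq[X]) : ℕ :=
  {d : Fq[X] | d.Monic ∧ d ∣ f}.ncard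

/-- The multiplicity of `p` in the factorization of `f`. -/
noncomputable def mult {Fq : Type} [Field Fq] (p f : Fq[X]) : ℕ :=
  multiplicity p f

/-- `h = ĥ(x)`: the monic polynomial whose multiplicity at each monic irreducible `p`
equals `⌊1/(q^{deg p / x} - 1)⌋`. -/
noncomputable def IsHhat {Fq : Type} [Field Fq] [Fintype Fq] (x : ℝ) (h : Fq[X]) : Prop :=
  h.Monic ∧ ∀ p : Fq[X], p.Monic → Irreducible p →
    mult p h = ⌊1 / ((Fintype.card Fq : ℝ) ^ ((p.natDegree : ℝ) / x) - 1)⌋₊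

/-- `h` is an `x`-semi-superior highly composite polynomial. -/
noncomputable def IsSSHC {Fq : Type} [Field Fq] [Fintype Fq] (x : ℝ) (h : Fq[X]) : Prop :=
  h.Monic ∧ ∀ f : Fq[X], f.Monic →
    (tau f : ℝ) * (Fintype.card Fq : ℝ) ^ (-(f.natDegree : ℝ) / x) ≤
    (tau h : ℝ) * (Fintype.card Fq : ℝ) ^ (-(h.natDegree : ℝ) / x)

/-!
Write `c = q^{1/x}`. For monic `f`, `τ(f) q^{-deg f/x}` is the product over monic primes `p` of
`localWeight (c ^ deg p) (v_p f)`, where `localWeight y e = (e + 1) / y^e`. For `y > 1` this is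
unimodal in `e` with maximum at `⌊1/(y - 1)⌋`, attained at a second point (one less) exactly when
`⌊1/(y - 1)⌋ (y - 1) = 1`. So `ĥ(x)` maximises every factor, and `h` is `x`-SSHC iff each of its
multiplicities is a maximiser. For `x = s log q / log(1 + 1/r)` we have `c^s = 1 + 1/r`; a tie
`c^d = 1 + 1/m` gives `(1 + 1/m)^s = (1 + 1/r)^d`, and since both fractions are in lowest terms
this forces `d = s`. Thus the only freedom is to lower the multiplicity `r` by one at any subset
of the primes of degree `s`.
-/

open UniqueFactorizationMonoid

noncomputable def localWeight (y : ℝ) (e : ℕ) : ℝ := (e + 1) / y ^ e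

section LocalWeight

variable {y : ℝ}

lemma localWeight_pos (hy : 0 < y) (e : ℕ) : 0 < localWeight y e := by
  unfold localWeight; positivity

lemma localWeight_le_succ_iff (hy : 0 < y) {e : ℕ} :
    localWeight y e ≤ localWeight y (e + 1) ↔ (e + 1) * (y - 1) ≤ 1 := by
  unfold localWeight
  rw [div_le_div_iff₀ (by positivity) (by positivity), pow_succ]
  push_cast
  constructor <;> intro h <;> nlinarith [pow_pos hy e]

lemma localWeight_lt_succ_iff (hy : 0 < y) {e : ℕ} :
    localWeight y e < localWeight y (e + 1) ↔ (e + 1) * (y - 1) < 1 := by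
  unfold localWeight
  rw [div_lt_div_iff₀ (by positivity) (by positivity), pow_succ]
  push_cast
  constructor <;> intro h <;> nlinarith [pow_pos hy e]

lemma localWeight_le_succ_of_succ_le_floor (hy : 1 < y) {e : ℕ}
    (he : e + 1 ≤ ⌊1 / (y - 1)⌋₊) : localWeight y e ≤ localWeight y (e + 1) := by
  rw [localWeight_le_succ_iff (by positivity), ← le_div_iff₀ (by linarith)]
  exact_mod_cast (Nat.le_floor_iff (by positivity)).mp he

lemma localWeight_succ_lt_of_floor_le (hy : 1 < y) {e : ℕ} (he : ⌊1 / (y - 1)⌋₊ ≤ e) :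
    localWeight y (e + 1) < localWeight y e := by
  rw [← not_le, localWeight_le_succ_iff (by positivity), ← le_div_iff₀ (by linarith), not_le]
  exact_mod_cast (Nat.floor_lt (by positivity)).mp (Nat.lt_succ_of_le he)

lemma localWeight_lt_floor_of_lt (hy : 1 < y) {e : ℕ} (he : ⌊1 / (y - 1)⌋₊ < e) :
    localWeight y e < localWeight y ⌊1 / (y - 1)⌋₊ :=
  Nat.rel_of_forall_rel_succ_of_le_of_lt (· > ·)
    (fun _ hn => localWeight_succ_lt_of_floor_le hy hn) le_rfl he

lemma localWeight_lt_floor_of_succ_lt (hy : 1 < y) {e : ℕ} (he : e + 1 < ⌊1 / (y - 1)⌋₊) :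
    localWeight y e < localWeight y ⌊1 / (y - 1)⌋₊ := by
  set a := ⌊1 / (y - 1)⌋₊
  have hinc : StrictMonoOn (localWeight y) (Set.Iic (a - 1)) :=
    strictMonoOn_Iic_of_lt_succ fun m hm => by
      have := (localWeight_le_succ_iff (by positivity)).mp
        (localWeight_le_succ_of_succ_le_floor hy (show m + 1 + 1 ≤ a by omega))
      rw [Order.succ_eq_add_one, localWeight_lt_succ_iff (by positivity)]
      push_cast at this
      nlinarith
  calc localWeight y e < localWeight y (a - 1) := hinc (by simp; omega) (by simp) (by omega)
    _ ≤ localWeight y (a - 1 + 1) := localWeight_le_succ_of_succ_le_floor hy (by omega)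
    _ = localWeight y a := by rw [Nat.sub_add_cancel (by omega)]

lemma localWeight_pred_floor_eq_iff (hy : 1 < y) {e : ℕ} (he : e + 1 = ⌊1 / (y - 1)⌋₊) :
    localWeight y e = localWeight y ⌊1 / (y - 1)⌋₊ ↔ ⌊1 / (y - 1)⌋₊ * (y - 1) = 1 := by
  have hle := localWeight_le_succ_of_succ_le_floor hy he.le
  rw [← he, le_antisymm_iff, and_iff_right hle, ← not_lt, localWeight_lt_succ_iff (by positivity)]
  rw [localWeight_le_succ_iff (by positivity)] at hle
  push_cast
  exact ⟨fun h => le_antisymm hle (not_lt.mp h), fun h => h.not_lt⟩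

theorem localWeight_le_floor (hy : 1 < y) (e : ℕ) :
    localWeight y e ≤ localWeight y ⌊1 / (y - 1)⌋₊ := by
  rcases lt_trichotomy (e + 1) ⌊1 / (y - 1)⌋₊ with h | h | h
  · exact (localWeight_lt_floor_of_succ_lt hy h).le
  · exact (localWeight_le_succ_of_succ_le_floor hy h.le).trans_eq (by rw [h])
  · rcases (Nat.lt_succ_iff.mp h).lt_or_eq with h | h
    · exact (localWeight_lt_floor_of_lt hy h).le
    · rw [h]

theorem localWeight_eq_floor_iff (hy : 1 < y) {e : ℕ} :
    localWeight y e = localWeight y ⌊1 / (y - 1)⌋₊ ↔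
      e = ⌊1 / (y - 1)⌋₊ ∨ (e + 1 = ⌊1 / (y - 1)⌋₊ ∧ ⌊1 / (y - 1)⌋₊ * (y - 1) = 1) := by
  rcases lt_trichotomy (e + 1) ⌊1 / (y - 1)⌋₊ with h | h | h
  · simp only [(localWeight_lt_floor_of_succ_lt hy h).ne, false_iff]
    omega
  · rw [localWeight_pred_floor_eq_iff hy h]
    simp only [h, true_and, iff_or_self]
    omega
  · rcases (Nat.lt_succ_iff.mp h).lt_or_eq with h | rfl
    · simp only [(localWeight_lt_floor_of_lt hy h).ne, false_iff]
      omega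
    · simp

end LocalWeight

section Tie

variable {r s : ℕ}

lemma eq_of_one_add_inv_pow_eq {m d : ℕ} (hm : 0 < m) (hr : 0 < r) (hs : 0 < s)
    (h : (1 + 1 / m : ℝ) ^ s = (1 + 1 / r) ^ d) : d = s := by
  have hnat : (m + 1) ^ s * r ^ d = (r + 1) ^ d * m ^ s := by
    rw [one_add_div (by positivity), one_add_div (by positivity), div_pow, div_pow,
      div_eq_div_iff (by positivity) (by positivity)] at h
    exact_mod_cast h
  -- `(m + 1) / m` and `(r + 1) / r` are in lowest terms
  have hpow : m ^ s = r ^ d := Nat.dvd_antisymm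
    (((Nat.coprime_self_add_right.mpr (Nat.coprime_one_right m)).pow s s).dvd_of_dvd_mul_left
      (hnat ▸ dvd_mul_left _ _))
    (((Nat.coprime_self_add_right.mpr (Nat.coprime_one_right r)).pow d d).dvd_of_dvd_mul_left
      (hnat ▸ dvd_mul_left _ _))
  have hu : (1 : ℝ) < 1 + 1 / r := by simp; positivity
  have hinv : ∀ {a b : ℕ}, 0 < a → a < b → (1 + 1 / b : ℝ) < 1 + 1 / a := fun ha hab => by
    gcongr
  rcases lt_trichotomy m r with hmr | rfl | hmr
  · have hsd : s < d := (pow_lt_pow_iff_right₀ hu).mp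
      (h ▸ pow_lt_pow_left₀ (hinv hm hmr) (by positivity) hs.ne')
    have := Nat.pow_lt_pow_left hmr hs.ne'
    have := Nat.pow_le_pow_right hr hsd.le
    omega
  · exact (pow_right_injective₀ (by positivity) hu.ne' h).symm
  · have hds : d < s := (pow_lt_pow_iff_right₀ hu).mp
      (h ▸ pow_lt_pow_left₀ (hinv hr hmr) (by positivity) hs.ne')
    have := Nat.pow_lt_pow_left hmr hs.ne'
    have := Nat.pow_le_pow_right hr hds.le
    omega

variable {c : ℝ}

lemma floor_inv_pow_sub_one_eq (hcs : c ^ s = 1 + 1 / r) : ⌊1 / (c ^ s - 1)⌋₊ = r := by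
  simp [hcs]

theorem localWeight_eq_floor_iff_of_pow_eq (hr : 0 < r) (hs : 0 < s) (hc : 1 < c)
    (hcs : c ^ s = 1 + 1 / r) {d e : ℕ} (hd : 0 < d) :
    localWeight (c ^ d) e = localWeight (c ^ d) ⌊1 / (c ^ d - 1)⌋₊ ↔
      e = ⌊1 / (c ^ d - 1)⌋₊ ∨ (d = s ∧ e + 1 = r) := by
  rw [localWeight_eq_floor_iff (one_lt_pow₀ hc hd.ne')]
  refine or_congr_right ⟨fun ⟨he, htie⟩ => ?_, fun ⟨hds, he⟩ => ?_⟩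
  · generalize ⌊1 / (c ^ d - 1)⌋₊ = m at he htie
    have hm : 0 < m := Nat.pos_of_ne_zero (by rintro rfl; simp at htie)
    have hcd : c ^ d = 1 + 1 / m := by field_simp; linarith
    obtain rfl : d = s := eq_of_one_add_inv_pow_eq hm hr hs (by
      rw [← hcd, ← hcs, ← pow_mul, ← pow_mul, mul_comm])
    obtain rfl : m = r := by simpa using hcd.symm.trans hcs
    exact ⟨rfl, he⟩
  · subst hds
    rw [floor_inv_pow_sub_one_eq hcs, hcs]
    exact ⟨he, by field_simp; ring⟩

end Tie

section Multiplicity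

variable {K : Type} [Field K] {p f g : K[X]}

lemma monic_irreducible_of_mem_normalizedFactors [DecidableEq K] (hp : p ∈ normalizedFactors f) :
    p.Monic ∧ Irreducible p :=
  ⟨normalize_normalized_factor p hp ▸ monic_normalize (prime_of_normalized_factor p hp).ne_zero,
    irreducible_of_normalized_factor p hp⟩

lemma prod_normalizedFactors_of_monic [DecidableEq K] (hf : f.Monic) :
    (normalizedFactors f).prod = f := by
  rw [prod_normalizedFactors_eq hf.ne_zero, hf.normalize_eq_self]

lemma mult_eq_count_normalizedFactors [DecidableEq K] (hp : p.Monic) (hip : Irreducible p)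
    (hf : f ≠ 0) : mult p f = (normalizedFactors f).count p := by
  rw [mult, multiplicity_eq_count_normalizedFactors hip hf, hp.normalize_eq_self]

lemma mult_eq_zero_of_notMem_normalizedFactors [DecidableEq K] (hp : p.Monic)
    (hip : Irreducible p) (hf : f ≠ 0) (hpf : p ∉ (normalizedFactors f).toFinset) :
    mult p f = 0 := by
  rw [mult_eq_count_normalizedFactors hp hip hf,
    Multiset.count_eq_zero_of_notMem fun h => hpf (Multiset.mem_toFinset.mpr h)]

lemma mult_mul (hip : Irreducible p) (hf : f ≠ 0) (hg : g ≠ 0) :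
    mult p (f * g) = mult p f + mult p g :=
  multiplicity_mul hip.prime (.of_not_isUnit hip.not_isUnit (mul_ne_zero hf hg))

lemma mult_pow (hip : Irreducible p) (hf : f ≠ 0) (n : ℕ) : mult p (f ^ n) = n * mult p f :=
  FiniteMultiplicity.multiplicity_pow hip.prime (.of_not_isUnit hip.not_isUnit hf)

lemma mult_eq_zero_of_ne (hp : p.Monic) (hip : Irreducible p) (hf : f.Monic)
    (hif : Irreducible f) (hne : p ≠ f) : mult p f = 0 :=
  multiplicity_eq_zero.mpr fun hdvd =>
    hne (eq_of_monic_of_associated hp hf (hip.associated_of_dvd hif hdvd))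

lemma mult_prod_pow [DecidableEq K] {T : Finset K[X]} (e : K[X] → ℕ)
    (hT : ∀ q ∈ T, q.Monic ∧ Irreducible q) (hp : p.Monic) (hip : Irreducible p) :
    mult p (∏ q ∈ T, q ^ e q) = if p ∈ T then e p else 0 := by
  induction T using Finset.induction_on with
  | empty => simpa [mult] using multiplicity_of_one_right hip.not_isUnit
  | insert a T ha ih =>
    obtain ⟨⟨ham, hai⟩, hT⟩ := Finset.forall_mem_insert _ _ _ |>.mp hT
    rw [Finset.prod_insert ha, mult_mul hip (pow_ne_zero _ hai.ne_zero)
      (Finset.prod_ne_zero_iff.mpr fun q hq => pow_ne_zero _ (hT q hq).2.ne_zero), ih hT,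
      mult_pow hip hai.ne_zero]
    by_cases hpa : p = a
    · subst hpa
      simp [ha, mult, multiplicity_self]
    · simp [hpa, mult_eq_zero_of_ne hp hip ham hai hpa]

lemma dvd_of_forall_mult_le (hf : f.Monic) (hg : g ≠ 0)
    (h : ∀ p : K[X], p.Monic → Irreducible p → mult p f ≤ mult p g) : f ∣ g := by
  classical
  rw [dvd_iff_normalizedFactors_le_normalizedFactors hf.ne_zero hg, Multiset.le_iff_count]
  intro p
  by_cases hp : p ∈ normalizedFactors f
  · obtain ⟨hpm, hpi⟩ := monic_irreducible_of_mem_normalizedFactors hp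
    rw [← mult_eq_count_normalizedFactors hpm hpi hf.ne_zero,
      ← mult_eq_count_normalizedFactors hpm hpi hg]
    exact h p hpm hpi
  · simp [Multiset.count_eq_zero_of_notMem hp]

lemma eq_of_forall_mult_eq (hf : f.Monic) (hg : g.Monic)
    (h : ∀ p : K[X], p.Monic → Irreducible p → mult p f = mult p g) : f = g :=
  eq_of_monic_of_associated hf hg <| associated_of_dvd_dvd
    (dvd_of_forall_mult_le hf hg.ne_zero fun p hp hip => (h p hp hip).le)
    (dvd_of_forall_mult_le hg hf.ne_zero fun p hp hip => (h p hp hip).ge)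

lemma exists_monic_forall_mult_eq (e : K[X] → ℕ)
    (he : {p : K[X] | p.Monic ∧ Irreducible p ∧ e p ≠ 0}.Finite) :
    ∃ H : K[X], H.Monic ∧ ∀ p : K[X], p.Monic → Irreducible p → mult p H = e p := by
  classical
  refine ⟨∏ q ∈ he.toFinset, q ^ e q,
    monic_prod_of_monic _ _ fun q hq => ((he.mem_toFinset.mp hq).1).pow _, fun p hp hip => ?_⟩
  rw [mult_prod_pow e (fun q hq => ⟨(he.mem_toFinset.mp hq).1, (he.mem_toFinset.mp hq).2.1⟩)
    hp hip]
  split_ifs with h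
  · rfl
  · simp_all

end Multiplicity

section DivisorCount

variable {K : Type} [Field K] [DecidableEq K] {f : K[X]}

lemma normalizedFactors_prod_of_le {t : Multiset K[X]} (ht : t ≤ normalizedFactors f) :
    normalizedFactors t.prod = t := by
  rw [normalizedFactors_prod_eq _ fun q hq =>
      irreducible_of_normalized_factor q (Multiset.mem_of_le ht hq),
    Multiset.map_congr rfl fun q hq => normalize_normalized_factor q (Multiset.mem_of_le ht hq),
    Multiset.map_id']

lemma tau_eq_card_Iic (hf : f.Monic) : tau f = (Finset.Iic (normalizedFactors f)).card := by
  have hdiv : {d : K[X] | d.Monic ∧ d ∣ f} =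
      Multiset.prod '' Set.Iic (normalizedFactors f) := by
    ext d
    rw [Set.mem_image]
    constructor
    · rintro ⟨hd, hdf⟩
      exact ⟨normalizedFactors d,
        (dvd_iff_normalizedFactors_le_normalizedFactors hd.ne_zero hf.ne_zero).mp hdf,
        prod_normalizedFactors_of_monic hd⟩
    · rintro ⟨t, ht, rfl⟩
      refine ⟨?_, prod_normalizedFactors_of_monic hf ▸ Multiset.prod_dvd_prod_of_le ht⟩
      simpa using monic_multiset_prod_of_monic t id fun q hq =>
        (monic_irreducible_of_mem_normalizedFactors (Multiset.mem_of_le ht hq)).1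
  have hinj : Set.InjOn Multiset.prod (Set.Iic (normalizedFactors f)) := fun t ht t' ht' h => by
    rw [← normalizedFactors_prod_of_le ht, ← normalizedFactors_prod_of_le ht', h]
  rw [tau, hdiv, hinj.ncard_image, ← Finset.coe_Iic, Set.ncard_coe_finset]

lemma natDegree_eq_sum_count (hf : f.Monic) :
    f.natDegree = ∑ p ∈ (normalizedFactors f).toFinset,
      (normalizedFactors f).count p * p.natDegree := by
  conv_lhs => rw [← prod_normalizedFactors_of_monic hf]
  rw [natDegree_multiset_prod_of_monic _ fun q hq =>
    (monic_irreducible_of_mem_normalizedFactors hq).1, Finset.sum_multiset_map_count]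
  rfl

theorem tau_div_pow_eq_prod (c : ℝ) (hf : f.Monic) {U : Finset K[X]}
    (hU : ∀ p ∈ U, p.Monic ∧ Irreducible p) (hfU : (normalizedFactors f).toFinset ⊆ U) :
    (tau f : ℝ) / c ^ f.natDegree = ∏ p ∈ U, localWeight (c ^ p.natDegree) (mult p f) := by
  have hcount : ∀ p ∈ (normalizedFactors f).toFinset, mult p f = (normalizedFactors f).count p :=
    fun p hp =>
      have hp' := monic_irreducible_of_mem_normalizedFactors (Multiset.mem_toFinset.mp hp)
      mult_eq_count_normalizedFactors hp'.1 hp'.2 hf.ne_zero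
  rw [← Finset.prod_subset hfU fun p hpU hp => ?_, tau_eq_card_Iic hf, Multiset.card_Iic,
    natDegree_eq_sum_count hf, ← Finset.prod_pow_eq_pow_sum, Nat.cast_prod,
    ← Finset.prod_div_distrib]
  · refine Finset.prod_congr rfl fun p hp => ?_
    rw [hcount p hp, localWeight, mul_comm, pow_mul]
    push_cast
    rfl
  · simp [mult_eq_zero_of_notMem_normalizedFactors (hU p hpU).1 (hU p hpU).2 hf.ne_zero hp,
      localWeight]

end DivisorCount

lemma Finset.prod_eq_prod_iff_of_pos_of_le {ι : Type*} {s : Finset ι} {u v : ι → ℝ}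
    (hu : ∀ i ∈ s, 0 < u i) (huv : ∀ i ∈ s, u i ≤ v i) :
    ∏ i ∈ s, u i = ∏ i ∈ s, v i ↔ ∀ i ∈ s, u i = v i := by
  refine ⟨fun h => ?_, Finset.prod_congr rfl⟩
  by_contra! ⟨i, hi, hne⟩
  exact (Finset.prod_lt_prod hu huv ⟨i, hi, (huv i hi).lt_of_ne hne⟩).ne h

section Optimal

variable {K : Type} [Field K] {c : ℝ} {f g h H : K[X]}

lemma exists_tau_div_pow_eq_prod_and_eq_prod (c : ℝ) (hf : f.Monic) (hg : g.Monic) :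
    ∃ U : Finset K[X], (∀ p ∈ U, p.Monic ∧ Irreducible p) ∧
      (∀ p : K[X], p.Monic → Irreducible p → p ∉ U → mult p f = 0 ∧ mult p g = 0) ∧
      (tau f : ℝ) / c ^ f.natDegree = ∏ p ∈ U, localWeight (c ^ p.natDegree) (mult p f) ∧
      (tau g : ℝ) / c ^ g.natDegree = ∏ p ∈ U, localWeight (c ^ p.natDegree) (mult p g) := by
  classical
  set U := (normalizedFactors f).toFinset ∪ (normalizedFactors g).toFinset
  have hU : ∀ p ∈ U, p.Monic ∧ Irreducible p := fun p hp => by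
    rcases Finset.mem_union.mp hp with hp | hp <;>
      exact monic_irreducible_of_mem_normalizedFactors (Multiset.mem_toFinset.mp hp)
  exact ⟨U, hU, fun p hp hip hpU =>
      ⟨mult_eq_zero_of_notMem_normalizedFactors hp hip hf.ne_zero
          fun h => hpU (Finset.subset_union_left h),
        mult_eq_zero_of_notMem_normalizedFactors hp hip hg.ne_zero
          fun h => hpU (Finset.subset_union_right h)⟩,
    tau_div_pow_eq_prod c hf hU Finset.subset_union_left,
    tau_div_pow_eq_prod c hg hU Finset.subset_union_right⟩

variable (hc : 1 < c) (hH : H.Monic)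
  (hHmult : ∀ p : K[X], p.Monic → Irreducible p → mult p H = ⌊1 / (c ^ p.natDegree - 1)⌋₊)
include hc hH hHmult

theorem tau_div_pow_le (hf : f.Monic) :
    (tau f : ℝ) / c ^ f.natDegree ≤ tau H / c ^ H.natDegree := by
  obtain ⟨U, hU, -, hfU, hHU⟩ := exists_tau_div_pow_eq_prod_and_eq_prod c hf hH
  rw [hfU, hHU]
  refine Finset.prod_le_prod (fun p hp => (localWeight_pos (by positivity) _).le) fun p hp => ?_
  rw [hHmult p (hU p hp).1 (hU p hp).2]
  exact localWeight_le_floor (one_lt_pow₀ hc (hU p hp).2.natDegree_pos.ne') _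

theorem tau_div_pow_eq_iff (hf : f.Monic) :
    (tau f : ℝ) / c ^ f.natDegree = tau H / c ^ H.natDegree ↔
      ∀ p : K[X], p.Monic → Irreducible p →
        localWeight (c ^ p.natDegree) (mult p f) = localWeight (c ^ p.natDegree) (mult p H) := by
  obtain ⟨U, hU, hUc, hfU, hHU⟩ := exists_tau_div_pow_eq_prod_and_eq_prod c hf hH
  rw [hfU, hHU, Finset.prod_eq_prod_iff_of_pos_of_le
    (fun p hp => localWeight_pos (by positivity) _) fun p hp => ?_]
  · refine ⟨fun h p hp hip => ?_, fun h p hpU => h p (hU p hpU).1 (hU p hpU).2⟩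
    by_cases hpU : p ∈ U
    · exact h p hpU
    · rw [(hUc p hp hip hpU).1, (hUc p hp hip hpU).2]
  · rw [hHmult p (hU p hp).1 (hU p hp).2]
    exact localWeight_le_floor (one_lt_pow₀ hc (hU p hp).2.natDegree_pos.ne') _

theorem forall_tau_div_pow_le_iff (hh : h.Monic) :
    (∀ f : K[X], f.Monic → (tau f : ℝ) / c ^ f.natDegree ≤ tau h / c ^ h.natDegree) ↔
      ∀ p : K[X], p.Monic → Irreducible p →
        localWeight (c ^ p.natDegree) (mult p h) = localWeight (c ^ p.natDegree) (mult p H) := by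
  rw [← tau_div_pow_eq_iff hc hH hHmult hh]
  exact ⟨fun hmax => le_antisymm (tau_div_pow_le hc hH hHmult hh) (hmax H hH),
    fun heq f hf => heq ▸ tau_div_pow_le hc hH hHmult hf⟩

end Optimal

section Existence

variable {K : Type} [Field K] {c : ℝ}

lemma finite_setOf_natDegree_le [Finite K] (n : ℕ) : {p : K[X] | p.natDegree ≤ n}.Finite := by
  have : Finite (degreeLT K (n + 1)) := .of_equiv _ (degreeLTEquiv K (n + 1)).toEquiv.symm
  refine (Set.toFinite (degreeLT K (n + 1) : Set K[X])).subset fun p hp => ?_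
  rw [SetLike.mem_coe, mem_degreeLT]
  exact degree_le_natDegree.trans_lt (by exact_mod_cast Nat.lt_succ_of_le hp)

lemma finite_setOf_monic_irreducible_natDegree_eq [Finite K] (s : ℕ) :
    {p : K[X] | p.Monic ∧ Irreducible p ∧ p.natDegree = s}.Finite :=
  (finite_setOf_natDegree_le s).subset fun _ hp => hp.2.2.le

lemma le_floor_of_floor_ne_zero (hc : 1 < c) {d : ℕ} (hd : ⌊1 / (c ^ d - 1)⌋₊ ≠ 0) :
    d ≤ ⌊1 / (c - 1)⌋₊ := by
  have h1 : 1 ≤ 1 / (c ^ d - 1) := Nat.floor_pos.mp (Nat.pos_of_ne_zero hd)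
  have hpos : 0 < c ^ d - 1 := by
    by_contra! h
    linarith [div_nonpos_of_nonneg_of_nonpos zero_le_one h]
  have hle : c ^ d - 1 ≤ 1 := by rwa [le_div_iff₀ hpos, one_mul] at h1
  have hbern : 1 + d * (c - 1) ≤ c ^ d := by
    simpa using one_add_mul_le_pow (a := c - 1) (by linarith) d
  exact Nat.le_floor ((le_div_iff₀ (by linarith)).mpr (by linarith))

theorem exists_monic_forall_mult_eq_floor [Finite K] (hc : 1 < c) :
    ∃ H : K[X], H.Monic ∧
      ∀ p : K[X], p.Monic → Irreducible p → mult p H = ⌊1 / (c ^ p.natDegree - 1)⌋₊ :=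
  exists_monic_forall_mult_eq _ <| (finite_setOf_natDegree_le ⌊1 / (c - 1)⌋₊).subset
    fun _ hp => le_floor_of_floor_ne_zero hc hp.2.2

end Existence

section PrimeRemoval

variable {K : Type} [Field K] {h H : K[X]}

lemma mult_prod_id [DecidableEq K] {p : K[X]} {P : Finset K[X]}
    (hP : ∀ q ∈ P, q.Monic ∧ Irreducible q) (hp : p.Monic) (hip : Irreducible p) :
    mult p (P.prod id) = if p ∈ P then 1 else 0 := by
  simpa using mult_prod_pow (fun _ => 1) hP hp hip

lemma eq_of_prod_id_eq {P Q : Finset K[X]} (hP : ∀ q ∈ P, q.Monic ∧ Irreducible q)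
    (hQ : ∀ q ∈ Q, q.Monic ∧ Irreducible q) (h : P.prod id = Q.prod id) : P = Q := by
  classical
  have hmem : ∀ p, p.Monic → Irreducible p → (p ∈ P ↔ p ∈ Q) := fun p hp hip => by
    have := mult_prod_id hP hp hip
    rw [h, mult_prod_id hQ hp hip] at this
    split_ifs at this <;> simp_all
  ext p
  exact ⟨fun hpP => (hmem p (hP p hpP).1 (hP p hpP).2).mp hpP,
    fun hpQ => (hmem p (hQ p hpQ).1 (hQ p hpQ).2).mpr hpQ⟩

theorem exists_mul_prod_eq_iff (s : ℕ) (hH : H.Monic) :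
    (∃ P : Finset K[X], (∀ p ∈ P, p.Monic ∧ Irreducible p ∧ p.natDegree = s) ∧
        h * P.prod id = H) ↔
      h.Monic ∧ ∀ p : K[X], p.Monic → Irreducible p →
        mult p h = mult p H ∨ (p.natDegree = s ∧ mult p h + 1 = mult p H) := by
  classical
  constructor
  · rintro ⟨P, hP, rfl⟩
    have hPm : (P.prod id).Monic := monic_prod_of_monic _ _ fun q hq => (hP q hq).1
    have hh : h.Monic := hPm.of_mul_monic_right hH
    refine ⟨hh, fun p hp hip => ?_⟩
    rw [mult_mul hip hh.ne_zero hPm.ne_zero,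
      mult_prod_id (fun q hq => ⟨(hP q hq).1, (hP q hq).2.1⟩) hp hip]
    split_ifs with hpP
    · exact Or.inr ⟨(hP p hpP).2.2, rfl⟩
    · exact Or.inl rfl
  · rintro ⟨hh, hpat⟩
    set P := (normalizedFactors H).toFinset.filter
      fun p => p.natDegree = s ∧ mult p h + 1 = mult p H
    have hP : ∀ p ∈ P, p.Monic ∧ Irreducible p ∧ p.natDegree = s := fun p hp => by
      obtain ⟨hpH, hps, -⟩ := Finset.mem_filter.mp hp
      have := monic_irreducible_of_mem_normalizedFactors (Multiset.mem_toFinset.mp hpH)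
      exact ⟨this.1, this.2, hps⟩
    have hmemP : ∀ p : K[X], p.Monic → Irreducible p →
        (p ∈ P ↔ p.natDegree = s ∧ mult p h + 1 = mult p H) := fun p hp hip => by
      refine ⟨fun hpP => (Finset.mem_filter.mp hpP).2, fun hps => Finset.mem_filter.mpr ⟨?_, hps⟩⟩
      by_contra hpH
      have := mult_eq_zero_of_notMem_normalizedFactors hp hip hH.ne_zero hpH
      omega
    have hPm : (P.prod id).Monic := monic_prod_of_monic _ _ fun q hq => (hP q hq).1
    refine ⟨P, hP, eq_of_forall_mult_eq (hh.mul hPm) hH fun p hp hip => ?_⟩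
    rw [mult_mul hip hh.ne_zero hPm.ne_zero,
      mult_prod_id (fun q hq => ⟨(hP q hq).1, (hP q hq).2.1⟩) hp hip]
    split_ifs with hpP
    · exact ((hmemP p hp hip).mp hpP).2
    · rcases hpat p hp hip with heq | hps
      · exact heq
      · exact absurd ((hmemP p hp hip).mpr hps) hpP

lemma natDegree_eq_sub_of_mul_prod_eq {s : ℕ} {P : Finset K[X]}
    (hP : ∀ p ∈ P, p.Monic ∧ p.natDegree = s) (hH : H ≠ 0) (hmul : h * P.prod id = H) :
    h.natDegree = H.natDegree - P.card * s := by
  have hPm : (P.prod id).Monic := monic_prod_of_monic _ _ fun q hq => (hP q hq).1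
  have hPdeg : (P.prod id).natDegree = P.card * s := by
    rw [natDegree_prod_of_monic P id fun q hq => (hP q hq).1,
      Finset.sum_congr rfl fun q hq => show (id q).natDegree = s from (hP q hq).2, Finset.sum_const, smul_eq_mul]
  rw [← hmul, natDegree_mul (left_ne_zero_of_mul (hmul ▸ hH)) hPm.ne_zero, hPdeg]
  omega

theorem ncard_setOf_mul_prod_eq {A : Finset K[X]} (hA : ∀ p ∈ A, p.Monic ∧ Irreducible p)
    (hAH : A.prod id ∣ H) (hH : H ≠ 0) :
    {h : K[X] | ∃ P ⊆ A, h * P.prod id = H}.ncard = 2 ^ A.card := by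
  have hdvd : ∀ P ⊆ A, P.prod id ∣ H := fun P hP =>
    (Finset.prod_dvd_prod_of_subset P A id hP).trans hAH
  have hne : ∀ P ⊆ A, P.prod id ≠ 0 := fun P hP => ne_zero_of_dvd_ne_zero hH (hdvd P hP)
  have hset : {h : K[X] | ∃ P ⊆ A, h * P.prod id = H} =
      (fun P : Finset K[X] => H / P.prod id) '' (A.powerset : Set (Finset K[X])) := by
    ext h
    simp only [Set.mem_image, Finset.mem_coe, Finset.mem_powerset]
    refine exists_congr fun P => and_congr_right fun hP => ⟨?_, ?_⟩
    · rintro rfl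
      exact mul_div_cancel_right₀ h (hne P hP)
    · rintro rfl
      rw [mul_comm, EuclideanDomain.mul_div_cancel' (hne P hP) (hdvd P hP)]
  have hinj : Set.InjOn (fun P : Finset K[X] => H / P.prod id) (A.powerset : Set (Finset K[X])) := fun P hP Q hQ hPQ => by
    simp only [Finset.coe_powerset, Set.mem_preimage, Set.mem_powerset_iff,
      Finset.coe_subset] at hP hQ
    refine eq_of_prod_id_eq (fun q hq => hA q (hP hq)) (fun q hq => hA q (hQ hq)) ?_
    have hPH := EuclideanDomain.mul_div_cancel' (hne P hP) (hdvd P hP)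
    have hQH := EuclideanDomain.mul_div_cancel' (hne Q hQ) (hdvd Q hQ)
    refine mul_right_cancel₀ (right_ne_zero_of_mul (hPH ▸ hH)) (hPH.trans ?_)
    rw [show H / P.prod id = H / Q.prod id from hPQ, hQH]
  rw [hset, hinj.ncard_image, Set.ncard_coe_finset, Finset.card_powerset]

end PrimeRemoval

section SemiSuperior

variable {Fq : Type} [Field Fq] [Fintype Fq] {x : ℝ} {h H : Fq[X]}

lemma rpow_natCast_div_eq_pow {q : ℝ} (hq : 0 ≤ q) (x : ℝ) (n : ℕ) :
    q ^ ((n : ℝ) / x) = (q ^ (1 / x)) ^ n := by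
  rw [← Real.rpow_natCast, ← Real.rpow_mul hq, one_div_mul_eq_div]

lemma isSSHC_iff_tau_div_pow : IsSSHC x h ↔ h.Monic ∧ ∀ f : Fq[X], f.Monic →
    (tau f : ℝ) / ((Fintype.card Fq : ℝ) ^ (1 / x)) ^ f.natDegree ≤
      tau h / ((Fintype.card Fq : ℝ) ^ (1 / x)) ^ h.natDegree := by
  have (t n : ℕ) : (t : ℝ) * (Fintype.card Fq : ℝ) ^ (-(n : ℝ) / x) =
      t / ((Fintype.card Fq : ℝ) ^ (1 / x)) ^ n := by
    rw [neg_div, Real.rpow_neg (Nat.cast_nonneg _), rpow_natCast_div_eq_pow (Nat.cast_nonneg _)]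
    exact (div_eq_mul_inv _ _).symm
  simp only [IsSSHC, this]

lemma isHhat_iff_pow : IsHhat x H ↔ H.Monic ∧ ∀ p : Fq[X], p.Monic → Irreducible p →
    mult p H = ⌊1 / (((Fintype.card Fq : ℝ) ^ (1 / x)) ^ p.natDegree - 1)⌋₊ := by
  simp only [IsHhat, rpow_natCast_div_eq_pow (Nat.cast_nonneg _)]

lemma IsHhat.eq {H' : Fq[X]} (hH : IsHhat x H) (hH' : IsHhat x H') : H = H' :=
  eq_of_forall_mult_eq hH.1 hH'.1 fun p hp hip => (hH.2 p hp hip).trans (hH'.2 p hp hip).symm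

variable {s r : ℕ} (hs : 0 < s) (hr : 0 < r)
  (hx : x = (s : ℝ) * Real.log (Fintype.card Fq) / Real.log (1 + 1 / (r : ℝ)))
include hs hr hx

lemma rpow_one_div_pow_eq : ((Fintype.card Fq : ℝ) ^ (1 / x)) ^ s = 1 + 1 / (r : ℝ) := by
  have hq : (1 : ℝ) < Fintype.card Fq := by exact_mod_cast Fintype.one_lt_card
  have hsx : (s : ℝ) / x = Real.logb (Fintype.card Fq) (1 + 1 / r) := by
    have : Real.log (1 + 1 / r) ≠ 0 := (Real.log_pos (by simp; positivity)).ne'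
    rw [hx, Real.logb]
    field_simp [(Real.log_pos hq).ne']
  rw [← rpow_natCast_div_eq_pow (by positivity), hsx, Real.rpow_logb (by positivity) hq.ne'
    (by positivity)]

lemma one_lt_rpow_one_div : 1 < (Fintype.card Fq : ℝ) ^ (1 / x) :=
  (one_lt_pow_iff_of_nonneg (by positivity) hs.ne').mp
    (rpow_one_div_pow_eq hs hr hx ▸ by simp; positivity)

lemma exists_isHhat : ∃ H : Fq[X], IsHhat x H := by
  simpa only [isHhat_iff_pow] using exists_monic_forall_mult_eq_floor (one_lt_rpow_one_div hs hr hx)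

lemma IsHhat.mult_eq_of_natDegree_eq (hH : IsHhat x H) {p : Fq[X]} (hp : p.Monic)
    (hip : Irreducible p) (hps : p.natDegree = s) : mult p H = r := by
  rw [(isHhat_iff_pow.mp hH).2 p hp hip, hps,
    floor_inv_pow_sub_one_eq (rpow_one_div_pow_eq hs hr hx)]

theorem isSSHC_iff_exists_mul_prod_eq (hH : IsHhat x H) :
    IsSSHC x h ↔ ∃ P : Finset Fq[X], (∀ p ∈ P, p.Monic ∧ Irreducible p ∧ p.natDegree = s) ∧
      h * P.prod id = H := by
  have hcs := rpow_one_div_pow_eq hs hr hx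
  have hc := one_lt_rpow_one_div hs hr hx
  obtain ⟨hHm, hHmult⟩ := isHhat_iff_pow.mp hH
  rw [isSSHC_iff_tau_div_pow, exists_mul_prod_eq_iff s hHm]
  refine and_congr_right fun hh => ?_
  rw [forall_tau_div_pow_le_iff hc hHm hHmult hh]
  refine forall_congr' fun p => forall_congr' fun hp => forall_congr' fun hip => ?_
  rw [hHmult p hp hip, localWeight_eq_floor_iff_of_pow_eq hr hs hc hcs hip.natDegree_pos]
  refine or_congr_right ⟨fun ⟨hps, he⟩ => ⟨hps, ?_⟩, fun ⟨hps, he⟩ => ⟨hps, ?_⟩⟩ <;>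
    rwa [hps, floor_inv_pow_sub_one_eq hcs] at *

lemma IsHhat.prod_dvd (hH : IsHhat x H) {A : Finset Fq[X]}
    (hA : ∀ p ∈ A, p.Monic ∧ Irreducible p ∧ p.natDegree = s) : A.prod id ∣ H := by
  classical
  refine dvd_of_forall_mult_le (monic_prod_of_monic _ _ fun p hp => (hA p hp).1) hH.1.ne_zero
    fun p hp hip => ?_
  rw [mult_prod_id (fun q hq => ⟨(hA q hq).1, (hA q hq).2.1⟩) hp hip]
  split_ifs with hpA
  · exact hH.mult_eq_of_natDegree_eq hs hr hx hp hip (hA p hpA).2.2 ▸ hr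
  · exact Nat.zero_le _

theorem ncard_setOf_isSSHC : {h : Fq[X] | IsSSHC x h}.ncard =
    2 ^ {p : Fq[X] | p.Monic ∧ Irreducible p ∧ p.natDegree = s}.ncard := by
  obtain ⟨H, hH⟩ := exists_isHhat hs hr hx
  have hfin := finite_setOf_monic_irreducible_natDegree_eq (K := Fq) s
  rw [Set.ncard_eq_toFinset_card _ hfin, ← ncard_setOf_mul_prod_eq
    (fun p hp => ⟨(hfin.mem_toFinset.mp hp).1, (hfin.mem_toFinset.mp hp).2.1⟩)
    (hH.prod_dvd hs hr hx fun p hp => hfin.mem_toFinset.mp hp) hH.1.ne_zero]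
  congr 1
  ext h
  simp only [isSSHC_iff_exists_mul_prod_eq hs hr hx hH, Finset.subset_iff,
    Set.Finite.mem_toFinset]
  rfl

end SemiSuperior

/-- For `x = s log q / log(1 + 1/r) ∈ S`, the `x`-SSHC polynomials are exactly the
polynomials `ĥ(x)/(P_{i_1} ⋯ P_{i_v})` with the `P_{i_j}` distinct monic irreducibles of
degree `s`; such a polynomial has degree `deg ĥ(x) - v s`, and there are exactly
`2^{π(s)}` of them. -/
theorem sshc_classification_of_mem_S {Fq : Type} [Field Fq] [Fintype Fq]
    (s r : ℕ) (hs : 0 < s) (hr : 0 < r) (x : ℝ)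
    (hx : x = (s : ℝ) * Real.log (Fintype.card Fq) / Real.log (1 + 1 / (r : ℝ))) :
    (∀ h : Fq[X], IsSSHC x h ↔
      ∃ (P : Finset Fq[X]) (H : Fq[X]), IsHhat x H ∧
        (∀ p ∈ P, p.Monic ∧ Irreducible p ∧ p.natDegree = s) ∧
        h * (P.prod id) = H ∧ h.natDegree = H.natDegree - P.card * s) ∧
    {h : Fq[X] | IsSSHC x h}.ncard =
      2 ^ {p : Fq[X] | p.Monic ∧ Irreducible p ∧ p.natDegree = s}.ncard := by
  obtain ⟨H, hH⟩ := exists_isHhat hs hr hx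
  have hsshc (h : Fq[X]) := isSSHC_iff_exists_mul_prod_eq hs hr hx (h := h) hH
  refine ⟨fun h => ⟨fun hh => ?_, fun ⟨P, H', hH', hP, hmul, _⟩ => ?_⟩, ?_⟩
  · obtain ⟨P, hP, hmul⟩ := (hsshc h).mp hh
    exact ⟨P, H, hH, hP, hmul,
      natDegree_eq_sub_of_mul_prod_eq (fun p hp => ⟨(hP p hp).1, (hP p hp).2.2⟩) hH.1.ne_zero hmul⟩
  · exact (hsshc h).mpr ⟨P, hP, hmul.trans (hH'.eq hH)⟩
  · exact ncard_setOf_isSSHC hs hr hx
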